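/- arXiv:1309.2759 — 3 statements merged into one kernel-verified Lean document; each statement's English description precedes it below -/
import Mathlib

section
/- For 0 < q < 1, the product of \bar{z}_q(2) with itself satisfies: \bar{z}_q(2)·\bar{z}_q(2) = 2\bar{z}_q(2,2) + 4\bar{z}_q(3,1) − 4\bar{z}_q(2,1) + 2\bar{z}_q(3) − \bar{z}_q(2) − δ\bar{z}_q(2), where δ = q d/dq. -/
/-- Modified qMZV of length one. -/
noncomputable def zbar1 (q : ℝ) (s : ℕ) : ℝ := ∑' l : ℕ, q ^ (l + 1) / (1 - q ^ (l + 1)) ^ s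

/-- Modified qMZV of length two. -/
noncomputable def zbar2 (q : ℝ) (a b : ℕ) : ℝ :=
  ∑' p : ℕ × ℕ, if p.2 < p.1 ∧ 0 < p.2 then
    q ^ p.1 / ((1 - q ^ p.1) ^ a * (1 - q ^ p.2) ^ b) else 0

/-- The derivation `δ = q d/dq`. -/
noncomputable def deltaZbar1 (q : ℝ) (s : ℕ) : ℝ := q * deriv (fun t : ℝ => zbar1 t s) q

/-!
For `x = q^a`, `y = q^b` the product `x/(1-x)^2 · y/(1-y)^2`, symmetrised in `x` and `y`, splits
into partial fractions in `(xy, y)` and `(xy, x)` (`mul_eq_prodKernel_add`). Summing over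
`a, b ≥ 1` and putting `(m, n) = (a + b, b)` yields `z̄(2,2)`, `z̄(3,1)`, `z̄(2,1)` and the
degenerate values `z̄(s,0) = ∑ (m - 1) q^m/(1-q^m)^s`. These are removed with `δ`: on
`f(q^m)` it acts as `m · u d/du` at `u = q^m`, and `u d/du (u/(1-u)^s) = s u/(1-u)^(s+1) -
(s-1) u/(1-u)^s`, so `δz̄(s)` is a combination of `z̄(s,0) + z̄(s)` and `z̄(s+1,0) + z̄(s+1)`.
-/

namespace ZBar

/-- The summand of `z̄_q(s, t)` at `(m, n)` is `zbarTerm s t (q ^ m) (q ^ n)`. -/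
noncomputable def zbarTerm (s t : ℕ) (u v : ℝ) : ℝ := u / ((1 - u) ^ s * (1 - v) ^ t)

variable {q : ℝ}

lemma pow_ne_one_of_abs_lt_one (hq : |q| < 1) {m : ℕ} (hm : m ≠ 0) : q ^ m ≠ 1 :=
  (abs_lt.mp (abs_pow q m ▸ pow_lt_one₀ (abs_nonneg q) hq hm)).2.ne

lemma one_sub_le_abs_one_sub {u r : ℝ} (hu : |u| ≤ r) : 1 - r ≤ |1 - u| := by
  have := abs_sub_abs_le_abs_sub 1 u
  rw [abs_one] at this
  linarith

lemma one_sub_abs_le_abs_one_sub_pow (hq : |q| ≤ 1) {m : ℕ} (hm : m ≠ 0) :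
    1 - |q| ≤ |1 - q ^ m| :=
  one_sub_le_abs_one_sub (by rw [abs_pow]; exact pow_le_of_le_one (abs_nonneg q) hq hm)

lemma abs_zbarTerm_pow_le (hq : |q| < 1) (s t : ℕ) {m n : ℕ} (hm : m ≠ 0) (hn : n ≠ 0) :
    |zbarTerm s t (q ^ m) (q ^ n)| ≤ |q| ^ m / (1 - |q|) ^ (s + t) := by
  have h0 : 0 < 1 - |q| := by linarith
  rw [zbarTerm, abs_div, abs_mul, abs_pow, abs_pow, abs_pow, pow_add]
  gcongr
  · exact one_sub_abs_le_abs_one_sub_pow hq.le hm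
  · exact one_sub_abs_le_abs_one_sub_pow hq.le hn

lemma summable_prod_of_abs_le {r C : ℝ} (hr0 : 0 ≤ r) (hr1 : r < 1) {F : ℕ × ℕ → ℝ}
    (hF : ∀ i j, |F (i, j)| ≤ C * (r ^ i * r ^ j)) : Summable F := by
  have hgeom := summable_geometric_of_lt_one hr0 hr1
  refine Summable.of_abs (.of_nonneg_of_le (fun _ => abs_nonneg _) (fun p => hF p.1 p.2) ?_)
  exact (hgeom.mul_of_nonneg hgeom (fun _ => by positivity) fun _ => by positivity).mul_left C

lemma hasSum_zbar1 (hq : |q| < 1) (s : ℕ) :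
    HasSum (fun l : ℕ => q ^ (l + 1) / (1 - q ^ (l + 1)) ^ s) (zbar1 q s) := by
  refine Summable.hasSum (Summable.of_abs (.of_nonneg_of_le (fun _ => abs_nonneg _)
    (fun l => ?_) ((summable_geometric_of_lt_one (abs_nonneg q) hq).mul_left
      (|q| / (1 - |q|) ^ s))))
  have := abs_zbarTerm_pow_le hq s 0 (Nat.succ_ne_zero l) one_ne_zero
  simp only [zbarTerm, pow_zero, mul_one, add_zero] at this
  calc _ ≤ |q| ^ (l + 1) / (1 - |q|) ^ s := this
    _ = _ := by ring

lemma summable_zbarTerm_reindex (hq : |q| < 1) (s t : ℕ) :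
    Summable fun p : ℕ × ℕ => zbarTerm s t (q ^ (p.1 + p.2 + 2)) (q ^ (p.2 + 1)) := by
  refine summable_prod_of_abs_le (abs_nonneg q) hq (C := ((1 - |q|) ^ (s + t))⁻¹)
    fun i j => (abs_zbarTerm_pow_le hq s t (m := i + j + 2) (n := j + 1) (by omega)
      (by omega)).trans ?_
  rw [div_eq_inv_mul, ← pow_add]
  exact mul_le_mul_of_nonneg_left
    (pow_le_pow_of_le_one (abs_nonneg q) hq.le (by omega)) (by positivity)

lemma hasSum_zbar2_summand_iff (s t : ℕ) {a : ℝ} :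
    HasSum (fun p : ℕ × ℕ => if p.2 < p.1 ∧ 0 < p.2 then
        zbarTerm s t (q ^ p.1) (q ^ p.2) else 0) a ↔
      HasSum (fun p : ℕ × ℕ => zbarTerm s t (q ^ (p.1 + p.2 + 2)) (q ^ (p.2 + 1))) a := by
  set g : ℕ × ℕ → ℕ × ℕ := fun p => (p.1 + p.2 + 2, p.2 + 1)
  have hg : g.Injective := fun p p' h => by
    simp only [g, Prod.mk.injEq] at h
    exact Prod.ext (by omega) (by omega)
  rw [← hg.hasSum_iff]
  · exact Iff.of_eq (congrArg (HasSum · a) (funext fun p =>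
      if_pos ⟨show p.2 + 1 < p.1 + p.2 + 2 by omega, Nat.succ_pos _⟩))
  · rintro ⟨m, n⟩ hx
    refine if_neg fun h => hx ⟨(m - n - 1, n - 1), ?_⟩
    simp only [g, Prod.mk.injEq]
    omega

lemma hasSum_zbar2 (hq : |q| < 1) (s t : ℕ) :
    HasSum (fun p : ℕ × ℕ => if p.2 < p.1 ∧ 0 < p.2 then
      zbarTerm s t (q ^ p.1) (q ^ p.2) else 0) (zbar2 q s t) :=
  ((hasSum_zbar2_summand_iff s t).mpr (summable_zbarTerm_reindex hq s t).hasSum).summable.hasSum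

lemma hasSum_zbar2_reindex (hq : |q| < 1) (s t : ℕ) :
    HasSum (fun p : ℕ × ℕ => zbarTerm s t (q ^ (p.1 + p.2 + 2)) (q ^ (p.2 + 1)))
      (zbar2 q s t) :=
  (hasSum_zbar2_summand_iff s t).mp (hasSum_zbar2 hq s t)

lemma hasSum_zbar2_zero (hq : |q| < 1) (s : ℕ) :
    HasSum (fun l : ℕ => (l : ℝ) * (q ^ (l + 1) / (1 - q ^ (l + 1)) ^ s)) (zbar2 q s 0) := by
  have hfib : HasSum (fun m : ℕ => ((m - 1 : ℕ) : ℝ) * (q ^ m / (1 - q ^ m) ^ s))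
      (zbar2 q s 0) := by
    refine (hasSum_zbar2 hq s 0).prod_fiberwise fun m => ?_
    have hsupp : ∀ n ∉ Finset.Ioo 0 m, (if n < m ∧ 0 < n then
        zbarTerm s 0 (q ^ m) (q ^ n) else 0) = 0 :=
      fun n hn => if_neg (by simpa [and_comm] using hn)
    convert (hasSum_sum_of_ne_finset_zero hsupp : HasSum _ _) using 1
    rw [Finset.sum_congr rfl fun n hn => if_pos (by simp at hn; omega)]
    simp [zbarTerm]
  simpa using (hasSum_nat_add_iff' 1).mpr hfib

lemma hasSum_zbar2_zero_add_zbar1 (hq : |q| < 1) (s : ℕ) :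
    HasSum (fun l : ℕ => ((l : ℝ) + 1) * (q ^ (l + 1) / (1 - q ^ (l + 1)) ^ s))
      (zbar2 q s 0 + zbar1 q s) := by
  convert (hasSum_zbar2_zero hq s).add (hasSum_zbar1 hq s) using 1
  funext l
  ring

lemma hasDerivAt_div_one_sub_pow (s : ℕ) {u : ℝ} (hu : u ≠ 1) :
    HasDerivAt (fun x => x / (1 - x) ^ s) ((1 + (s - 1) * u) / (1 - u) ^ (s + 1)) u := by
  have hu' : 1 - u ≠ 0 := sub_ne_zero.mpr hu.symm
  refine ((hasDerivAt_id u).fun_div ((hasDerivAt_id u).const_sub 1 |>.fun_pow s)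
    (pow_ne_zero s hu')).congr_deriv ?_
  rcases s with _ | s
  · simp only [pow_zero, CharP.cast_eq_zero]
    field_simp
    ring
  · simp only [id, Nat.add_sub_cancel, Nat.cast_add, Nat.cast_one]
    field_simp
    ring

lemma hasDerivAt_comp_div_one_sub_pow {f : ℝ → ℝ} {f' x : ℝ} (hf : HasDerivAt f f' x)
    (s : ℕ) (hx : f x ≠ 1) :
    HasDerivAt (fun y => f y / (1 - f y) ^ s)
      ((1 + (s - 1) * f x) / (1 - f x) ^ (s + 1) * f') x :=
  (hasDerivAt_div_one_sub_pow s hx).comp x hf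

lemma abs_div_one_sub_pow_le (s : ℕ) {u r : ℝ} (hu : |u| ≤ r) (hr : r < 1) :
    |(1 + (s - 1) * u) / (1 - u) ^ (s + 1)| ≤ (1 + |(s : ℝ) - 1|) / (1 - r) ^ (s + 1) := by
  have hr' : 0 < 1 - r := by linarith
  rw [abs_div, abs_pow]
  gcongr
  · calc |1 + (s - 1) * u| ≤ 1 + |(s : ℝ) - 1| * |u| := by
          simpa [abs_mul] using abs_add_le 1 ((s - 1) * u)
      _ ≤ 1 + |(s : ℝ) - 1| := by
          gcongr
          nlinarith [abs_nonneg ((s : ℝ) - 1), abs_nonneg u]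
  · exact one_sub_le_abs_one_sub hu

lemma summable_succ_mul_geometric {r : ℝ} (hr0 : 0 ≤ r) (hr1 : r < 1) :
    Summable fun l : ℕ => ((l + 1 : ℕ) : ℝ) * r ^ l := by
  refine ((summable_pow_mul_geometric_of_norm_lt_one 1 (by rwa [Real.norm_of_nonneg hr0])).add
    (summable_geometric_of_lt_one hr0 hr1)).congr fun l => ?_
  push_cast
  ring

lemma hasDerivAt_zbar1 (s : ℕ) (hq : |q| < 1) :
    HasDerivAt (fun t => zbar1 t s) (∑' l : ℕ,
      (1 + (s - 1) * q ^ (l + 1)) / (1 - q ^ (l + 1)) ^ (s + 1) * ((l + 1 : ℕ) * q ^ l)) q := by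
  obtain ⟨r, hqr, hr1⟩ := exists_between hq
  have hr0 : 0 < r := (abs_nonneg q).trans_lt hqr
  have habs : ∀ t ∈ Set.Ioo (-r) r, |t| ≤ r := fun t ht => abs_le.mpr ⟨ht.1.le, ht.2.le⟩
  have hpow_succ : ∀ t ∈ Set.Ioo (-r) r, ∀ l : ℕ, |t ^ (l + 1)| ≤ r := fun t ht l =>
    (abs_pow t _ ▸ pow_le_pow_left₀ (abs_nonneg t) (habs t ht) (l + 1)).trans
      (pow_le_of_le_one hr0.le hr1.le l.succ_ne_zero)
  refine hasDerivAt_tsum_of_isPreconnected (y₀ := 0)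
    (g := fun (l : ℕ) (t : ℝ) => t ^ (l + 1) / (1 - t ^ (l + 1)) ^ s)
    (g' := fun (l : ℕ) (t : ℝ) => (1 + (s - 1) * t ^ (l + 1)) / (1 - t ^ (l + 1)) ^ (s + 1) *
      ((l + 1 : ℕ) * t ^ l))
    (u := fun l => (1 + |(s : ℝ) - 1|) / (1 - r) ^ (s + 1) * (((l + 1 : ℕ) : ℝ) * r ^ l))
    ((summable_succ_mul_geometric hr0.le hr1).mul_left _) isOpen_Ioo isPreconnected_Ioo
    (fun l t ht => ?_) (fun l t ht => ?_) ⟨neg_lt_zero.mpr hr0, hr0⟩ (by simp)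
    (abs_lt.mp hqr)
  · simpa using hasDerivAt_comp_div_one_sub_pow (hasDerivAt_pow (l + 1) t) s
      (pow_ne_one_of_abs_lt_one ((habs t ht).trans_lt hr1) l.succ_ne_zero)
  · rw [Real.norm_eq_abs, abs_mul, abs_mul, abs_pow, Nat.abs_cast]
    gcongr
    · exact abs_div_one_sub_pow_le s (hpow_succ t ht l) hr1
    · exact habs t ht

lemma deltaZbar1_eq (hq : |q| < 1) (s : ℕ) :
    deltaZbar1 q s = s * (zbar2 q (s + 1) 0 + zbar1 q (s + 1))
      - (s - 1) * (zbar2 q s 0 + zbar1 q s) := by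
  rw [deltaZbar1, (hasDerivAt_zbar1 s hq).deriv, ← tsum_mul_left]
  refine HasSum.tsum_eq ?_
  refine (((hasSum_zbar2_zero_add_zbar1 hq (s + 1)).mul_left (s : ℝ)).sub
    ((hasSum_zbar2_zero_add_zbar1 hq s).mul_left ((s : ℝ) - 1))).congr_fun fun l => ?_
  have hne : 1 - q ^ (l + 1) ≠ 0 :=
    sub_ne_zero.mpr (pow_ne_one_of_abs_lt_one hq l.succ_ne_zero).symm
  push_cast
  field_simp
  ring

noncomputable def prodKernel (u v : ℝ) : ℝ :=
  2 * zbarTerm 2 2 u v + 4 * zbarTerm 3 1 u v - 4 * zbarTerm 2 1 u v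
    + zbarTerm 2 0 u v - 2 * zbarTerm 3 0 u v

lemma mul_eq_prodKernel_add {x y : ℝ} (hx : x ≠ 1) (hy : y ≠ 1) (hxy : x * y ≠ 1) :
    x / (1 - x) ^ 2 * (y / (1 - y) ^ 2) = (prodKernel (x * y) y + prodKernel (x * y) x) / 2 := by
  have hx' : 1 - x ≠ 0 := sub_ne_zero.mpr hx.symm
  have hy' : 1 - y ≠ 0 := sub_ne_zero.mpr hy.symm
  have hxy' : 1 - x * y ≠ 0 := sub_ne_zero.mpr hxy.symm
  simp only [prodKernel, zbarTerm]
  field_simp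
  ring

lemma hasSum_half_add_swap {β : Type*} {F : β × β → ℝ} {a : ℝ} (hF : HasSum F a) :
    HasSum (fun p => (F p + F p.swap) / 2) a := by
  simpa using (hF.add ((Equiv.prodComm β β).hasSum_iff.mpr hF)).div_const 2

lemma zbar1_two_mul_self (hq : |q| < 1) :
    zbar1 q 2 * zbar1 q 2 = 2 * zbar2 q 2 2 + 4 * zbar2 q 3 1 - 4 * zbar2 q 2 1
      + zbar2 q 2 0 - 2 * zbar2 q 3 0 := by
  have hker : HasSum (fun p : ℕ × ℕ => prodKernel (q ^ (p.1 + p.2 + 2)) (q ^ (p.2 + 1)))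
      (2 * zbar2 q 2 2 + 4 * zbar2 q 3 1 - 4 * zbar2 q 2 1 + zbar2 q 2 0 - 2 * zbar2 q 3 0) :=
    (((((hasSum_zbar2_reindex hq 2 2).mul_left 2).add
      ((hasSum_zbar2_reindex hq 3 1).mul_left 4)).sub
      ((hasSum_zbar2_reindex hq 2 1).mul_left 4)).add (hasSum_zbar2_reindex hq 2 0)).sub
      ((hasSum_zbar2_reindex hq 3 0).mul_left 2)
  have hnorm := (hasSum_zbar1 hq 2).summable.norm
  rw [zbar1, tsum_mul_tsum_of_summable_norm hnorm hnorm]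
  refine (tsum_congr fun p => ?_).trans (hasSum_half_add_swap hker).tsum_eq
  have hpow : ∀ i j : ℕ, q ^ (i + j + 2) = q ^ (i + 1) * q ^ (j + 1) := fun i j => by
    rw [← pow_add]; ring_nf
  rw [Prod.fst_swap, Prod.snd_swap, hpow, hpow, mul_comm (q ^ (p.2 + 1))]
  exact mul_eq_prodKernel_add (pow_ne_one_of_abs_lt_one hq p.1.succ_ne_zero)
    (pow_ne_one_of_abs_lt_one hq p.2.succ_ne_zero)
    (by rw [← hpow]; exact pow_ne_one_of_abs_lt_one hq (by omega))

end ZBar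

open ZBar in
/-- `z̄_q(2)² = 2z̄_q(2,2) + 4z̄_q(3,1) − 4z̄_q(2,1) + 2z̄_q(3) − z̄_q(2) − δz̄_q(2)`. -/
theorem zbar2_mul_zbar2 (q : ℝ) (hq0 : 0 < q) (hq1 : q < 1) :
    zbar1 q 2 * zbar1 q 2 =
      2 * zbar2 q 2 2 + 4 * zbar2 q 3 1 - 4 * zbar2 q 2 1
        + 2 * zbar1 q 3 - zbar1 q 2 - deltaZbar1 q 2 := by
  have hq : |q| < 1 := abs_lt.mpr ⟨by linarith, hq1⟩
  rw [zbar1_two_mul_self hq, deltaZbar1_eq hq 2]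
  push_cast
  ring
end

section
/- For 0 < q < 1: \bar{z}_q(2)·\bar{z}_q(3) = 3\bar{z}_q(3,2) + \bar{z}_q(2,3) + 6\bar{z}_q(4,1) − 2\bar{z}_q(2,2) − 7\bar{z}_q(3,1) + \bar{z}_q(2,1) − δ\bar{z}_q(3) + 3\bar{z}_q(4) − 2\bar{z}_q(3), where δ = q d/dq. -/
/-!
Put `C(t; a, b) = ∑_{n,k ≥ 1} q^{n+k} / ((1 - q^{n+k})^t (1 - q^n)^a (1 - q^k)^b)`
(`zbarConv q t a b`), so that `z̄(a) z̄(b) = C(0; a, b)`. With `x = q^n`, `y = q^k` the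
partial fraction identity
`1 / ((1 - x)(1 - y)) = 1 / ((1 - xy)(1 - x)) + 1 / ((1 - xy)(1 - y)) - 1 / (1 - xy)`
lowers `a` and `b` at the cost of raising `t`, until one of them vanishes; then `m = n + k`
identifies `C(t; a, 0)` with `z̄(t, a)`. The terms
`C(t; 0, 0) = z̄(t, 0) = ∑_m (m - 1) q^m / (1 - q^m)^t` that appear are absorbed by
`δ z̄(s) = ∑_m m (s q^m / (1 - q^m)^{s+1} - (s - 1) q^m / (1 - q^m)^s)`.
-/

open Finset in
theorem tsum_prod_add_eq_tsum_succ_nsmul {α : Type*} [AddCommMonoid α] [TopologicalSpace α]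
    [ContinuousAdd α] [T3Space α] {f : ℕ → α} (hf : Summable fun p : ℕ × ℕ => f (p.1 + p.2)) :
    ∑' p : ℕ × ℕ, f (p.1 + p.2) = ∑' n, (n + 1) • f n := by
  rw [← HasAntidiagonal.sigmaAntidiagonalEquivProd.tsum_eq]
  refine (((HasAntidiagonal.sigmaAntidiagonalEquivProd.summable_iff).2 hf).tsum_sigma'
      fun n => (hasSum_fintype _).summable).trans (tsum_congr fun n => ?_)
  have hfib : ∀ c : antidiagonal n, f ((c : ℕ × ℕ).1 + (c : ℕ × ℕ).2) = f n := fun c => by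
    rw [mem_antidiagonal.1 c.2]
  simp [hfib, tsum_fintype]

theorem tsum_succ_mul_eq_tsum_add {f : ℕ → ℝ} (hf : Summable fun n : ℕ => ((n : ℝ) + 1) * f n) :
    ∑' n : ℕ, ((n : ℝ) + 1) * f n = ∑' n, f n + ∑' n : ℕ, ((n : ℝ) + 1) * f (n + 1) := by
  have hf₀ : Summable f := hf.abs.of_norm_bounded fun n => by
    rw [Real.norm_eq_abs, abs_mul, abs_of_pos (by positivity : (0 : ℝ) < n + 1)]
    exact le_mul_of_one_le_left (abs_nonneg _) (by simp)
  have hf₁ : Summable fun n : ℕ => (n : ℝ) * f n := (hf.sub hf₀).congr fun n => by ring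
  rw [← hf₀.tsum_add hf₁ |>.symm.trans (tsum_congr fun n => by ring), hf₁.tsum_eq_zero_add]
  simp

theorem summable_succ_mul_pow {r : ℝ} (hr₀ : 0 ≤ r) (hr₁ : r < 1) :
    Summable fun n : ℕ => ((n : ℝ) + 1) * r ^ n := by
  have hr : ‖r‖ < 1 := by rwa [Real.norm_of_nonneg hr₀]
  simpa [add_mul] using
    (summable_pow_mul_geometric_of_norm_lt_one 1 hr).add (summable_geometric_of_lt_one hr₀ hr₁)

noncomputable def zbarTerm (q : ℝ) (s m : ℕ) : ℝ := q ^ m / (1 - q ^ m) ^ s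

noncomputable def convTerm (q : ℝ) (t a b n k : ℕ) : ℝ :=
  zbarTerm q a n * zbarTerm q b k / (1 - q ^ (n + k)) ^ t

noncomputable def zbarConv (q : ℝ) (t a b : ℕ) : ℝ :=
  ∑' p : ℕ × ℕ, convTerm q t a b (p.1 + 1) (p.2 + 1)

theorem convTerm_succ_succ {q : ℝ} (t a b : ℕ) {n k : ℕ} (hn : q ^ n ≠ 1) (hk : q ^ k ≠ 1)
    (hnk : q ^ (n + k) ≠ 1) :
    convTerm q t (a + 1) (b + 1) n k =
      convTerm q (t + 1) a (b + 1) n k + convTerm q (t + 1) (a + 1) b n k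
        - convTerm q (t + 1) a b n k := by
  unfold convTerm zbarTerm
  rw [pow_add q n k] at hnk ⊢
  generalize q ^ n = x at *
  generalize q ^ k = y at *
  have hx := sub_ne_zero.2 hn.symm
  have hy := sub_ne_zero.2 hk.symm
  have hxy := sub_ne_zero.2 hnk.symm
  rw [pow_succ (1 - x * y), pow_succ (1 - x), pow_succ (1 - y)]
  field_simp
  ring

theorem zbarConv_comm (q : ℝ) (t a b : ℕ) : zbarConv q t a b = zbarConv q t b a := by
  rw [zbarConv, ← (Equiv.prodComm ℕ ℕ).tsum_eq]
  refine tsum_congr fun p => ?_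
  simp only [convTerm, Equiv.prodComm_apply, Prod.fst_swap, Prod.snd_swap, add_comm, mul_comm]

theorem zbarConv_zero_right (q : ℝ) (t a : ℕ) : zbarConv q t a 0 = zbar2 q t a := by
  set g : ℕ × ℕ → ℕ × ℕ := fun p => (p.1 + p.2 + 2, p.1 + 1)
  have hg : Function.Injective g := fun p p' h => by
    simp only [g, Prod.mk.injEq] at h
    exact Prod.ext (by omega) (by omega)
  have hsupp : Function.support (fun p : ℕ × ℕ => if p.2 < p.1 ∧ 0 < p.2 then
      q ^ p.1 / ((1 - q ^ p.1) ^ t * (1 - q ^ p.2) ^ a) else 0) ⊆ Set.range g := by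
    rintro ⟨m, k⟩ hp
    have hmk : k < m ∧ 0 < k := by by_contra h; exact hp (if_neg h)
    exact ⟨(k - 1, m - k - 1), Prod.ext (show k - 1 + (m - k - 1) + 2 = m by omega)
      (show k - 1 + 1 = k by omega)⟩
  rw [zbar2, ← hg.tsum_eq hsupp]
  refine tsum_congr fun p => ?_
  simp only [g, if_pos (⟨by omega, by omega⟩ : p.1 + 1 < p.1 + p.2 + 2 ∧ 0 < p.1 + 1),
    convTerm, zbarTerm, pow_zero, div_one]
  rw [show p.1 + p.2 + 2 = (p.1 + 1) + (p.2 + 1) by ring, pow_add]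
  ring

theorem zbarConv_zero_left (q : ℝ) (t b : ℕ) : zbarConv q t 0 b = zbar2 q t b := by
  rw [zbarConv_comm, zbarConv_zero_right]

theorem hasDerivAt_zbarTerm (s m : ℕ) {y : ℝ} (hy : y ^ m ≠ 1) :
    HasDerivAt (fun t => zbarTerm t s m)
      (m * y ^ (m - 1) * (1 / (1 - y ^ m) ^ s + s * y ^ m / (1 - y ^ m) ^ (s + 1))) y := by
  have hpow := hasDerivAt_pow m y
  have hy' := sub_ne_zero.2 hy.symm
  refine (hpow.fun_div ((hpow.const_sub 1).fun_pow s) (pow_ne_zero s hy')).congr_deriv ?_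
  rcases s with _ | s
  · simp
  · simp only [Nat.add_sub_cancel]
    field_simp
    ring

section

variable {q : ℝ}

theorem one_sub_le_one_sub_pow (hq0 : 0 ≤ q) (hq1 : q ≤ 1) {m : ℕ} (hm : m ≠ 0) :
    1 - q ≤ 1 - q ^ m :=
  sub_le_sub_left (pow_le_of_le_one hq0 hq1 hm) 1

theorem zbarTerm_nonneg (hq0 : 0 ≤ q) (hq1 : q ≤ 1) (s m : ℕ) : 0 ≤ zbarTerm q s m :=
  div_nonneg (pow_nonneg hq0 m) (pow_nonneg (sub_nonneg.2 (pow_le_one₀ hq0 hq1)) s)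

theorem zbarTerm_le (hq0 : 0 ≤ q) (hq1 : q < 1) (s : ℕ) {m : ℕ} (hm : m ≠ 0) :
    zbarTerm q s m ≤ q ^ m / (1 - q) ^ s := by
  refine div_le_div_of_nonneg_left (pow_nonneg hq0 m) (pow_pos (sub_pos.2 hq1) s) ?_
  exact pow_le_pow_left₀ (sub_nonneg.2 hq1.le) (one_sub_le_one_sub_pow hq0 hq1.le hm) s

theorem summable_succ_mul_zbarTerm (hq0 : 0 ≤ q) (hq1 : q < 1) (s : ℕ) :
    Summable fun l : ℕ => ((l : ℝ) + 1) * zbarTerm q s (l + 1) := by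
  refine Summable.of_nonneg_of_le (fun l => mul_nonneg (by positivity)
    (zbarTerm_nonneg hq0 hq1.le s _)) (fun l => ?_)
    ((summable_succ_mul_pow hq0 hq1).mul_left (q / (1 - q) ^ s))
  calc ((l : ℝ) + 1) * zbarTerm q s (l + 1)
      ≤ ((l : ℝ) + 1) * (q ^ (l + 1) / (1 - q) ^ s) := by
        gcongr; exact zbarTerm_le hq0 hq1 s l.succ_ne_zero
    _ = q / (1 - q) ^ s * (((l : ℝ) + 1) * q ^ l) := by ring

theorem summable_zbarTerm (hq0 : 0 ≤ q) (hq1 : q < 1) (s : ℕ) :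
    Summable fun l : ℕ => zbarTerm q s (l + 1) :=
  (summable_succ_mul_zbarTerm hq0 hq1 s).of_nonneg_of_le (fun _ => zbarTerm_nonneg hq0 hq1.le s _)
    fun _ => le_mul_of_one_le_left (zbarTerm_nonneg hq0 hq1.le s _) (by simp)

theorem summable_zbarTerm_mul_zbarTerm (hq0 : 0 ≤ q) (hq1 : q < 1) (a b : ℕ) :
    Summable fun p : ℕ × ℕ => zbarTerm q a (p.1 + 1) * zbarTerm q b (p.2 + 1) :=
  (summable_zbarTerm hq0 hq1 a).mul_of_nonneg (summable_zbarTerm hq0 hq1 b)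
    (fun _ => zbarTerm_nonneg hq0 hq1.le a _) (fun _ => zbarTerm_nonneg hq0 hq1.le b _)

theorem summable_convTerm (hq0 : 0 ≤ q) (hq1 : q < 1) (t a b : ℕ) :
    Summable fun p : ℕ × ℕ => convTerm q t a b (p.1 + 1) (p.2 + 1) := by
  have hprod := fun p : ℕ × ℕ => mul_nonneg (zbarTerm_nonneg hq0 hq1.le a (p.1 + 1))
    (zbarTerm_nonneg hq0 hq1.le b (p.2 + 1))
  refine Summable.of_nonneg_of_le (fun p => div_nonneg (hprod p) ?_) (fun p => ?_)
    ((summable_zbarTerm_mul_zbarTerm hq0 hq1 a b).div_const ((1 - q) ^ t))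
  · exact pow_nonneg (sub_nonneg.2 (pow_le_one₀ hq0 hq1.le)) t
  refine div_le_div_of_nonneg_left (hprod p) (pow_pos (sub_pos.2 hq1) t) ?_
  exact pow_le_pow_left₀ (sub_nonneg.2 hq1.le) (one_sub_le_one_sub_pow hq0 hq1.le (by omega)) t

theorem zbar1_mul_zbar1 (hq0 : 0 ≤ q) (hq1 : q < 1) (a b : ℕ) :
    zbar1 q a * zbar1 q b = zbarConv q 0 a b := by
  refine ((summable_zbarTerm hq0 hq1 a).tsum_mul_tsum (summable_zbarTerm hq0 hq1 b)
    (summable_zbarTerm_mul_zbarTerm hq0 hq1 a b)).trans (tsum_congr fun p => ?_)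
  simp [convTerm]

theorem zbarConv_succ_succ (hq0 : 0 < q) (hq1 : q < 1) (t a b : ℕ) :
    zbarConv q t (a + 1) (b + 1) =
      zbarConv q (t + 1) a (b + 1) + zbarConv q (t + 1) (a + 1) b - zbarConv q (t + 1) a b := by
  have hS := summable_convTerm hq0.le hq1
  have hne : ∀ m : ℕ, q ^ (m + 1) ≠ 1 := fun m => (pow_lt_one₀ hq0.le hq1 m.succ_ne_zero).ne
  rw [zbarConv, zbarConv, zbarConv, zbarConv, ← (hS _ _ _).tsum_add (hS _ _ _),
    ← ((hS _ _ _).add (hS _ _ _)).tsum_sub (hS _ _ _)]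
  exact tsum_congr fun p => convTerm_succ_succ t a b (hne _) (hne _) (hne (p.1 + 1 + p.2))

theorem tsum_succ_mul_zbarTerm (hq0 : 0 ≤ q) (hq1 : q < 1) (s : ℕ) :
    ∑' l : ℕ, ((l : ℝ) + 1) * zbarTerm q s (l + 1) = zbar1 q s + zbar2 q s 0 := by
  have hdiag : ∀ p : ℕ × ℕ, convTerm q s 0 0 (p.1 + 1) (p.2 + 1) = zbarTerm q s (p.1 + p.2 + 2) :=
    fun p => by
      simp only [convTerm, zbarTerm, pow_zero, div_one]
      rw [← pow_add, show p.1 + 1 + (p.2 + 1) = p.1 + p.2 + 2 by ring]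
  have hS := (summable_convTerm hq0 hq1 s 0 0).congr hdiag
  rw [tsum_succ_mul_eq_tsum_add (summable_succ_mul_zbarTerm hq0 hq1 s), ← zbarConv_zero_right,
    zbarConv, tsum_congr hdiag,
    tsum_prod_add_eq_tsum_succ_nsmul (f := fun n => zbarTerm q s (n + 2)) hS]
  simp [nsmul_eq_mul, zbar1, zbarTerm]

theorem hasDerivAt_zbar1 (hq0 : 0 < q) (hq1 : q < 1) (s : ℕ) :
    HasDerivAt (fun t => zbar1 t s) (∑' l : ℕ, ((l + 1 : ℕ) : ℝ) * q ^ (l + 1 - 1) *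
      (1 / (1 - q ^ (l + 1)) ^ s + s * q ^ (l + 1) / (1 - q ^ (l + 1)) ^ (s + 1))) q := by
  obtain ⟨c, hqc, hc1⟩ := exists_between hq1
  have hq : q ∈ Set.Ioo 0 c := ⟨hq0, hqc⟩
  refine hasDerivAt_tsum_of_isPreconnected
    ((summable_succ_mul_pow (hq0.trans hqc).le hc1).mul_right
      (1 / (1 - c) ^ s + s * c / (1 - c) ^ (s + 1)))
    isOpen_Ioo isPreconnected_Ioo
    (fun l y hy => hasDerivAt_zbarTerm s (l + 1)
      (pow_lt_one₀ hy.1.le (hy.2.trans hc1) l.succ_ne_zero).ne)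
    (fun l y hy => ?_) hq (summable_zbarTerm hq0.le hq1 s) hq
  have hyc : y ^ (l + 1) ≤ c :=
    (pow_le_of_le_one hy.1.le (hy.2.trans hc1).le l.succ_ne_zero).trans hy.2.le
  have hc : 0 < 1 - c := sub_pos.2 hc1
  have hden : 1 - c ≤ 1 - y ^ (l + 1) := by linarith
  have hpos : 0 < 1 - y ^ (l + 1) := hc.trans_le hden
  have hy0 := hy.1.le
  simp only [Nat.cast_succ, Nat.add_sub_cancel]
  rw [Real.norm_of_nonneg (by generalize 1 - y ^ (l + 1) = d at hpos; positivity)]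
  have hc0 := (hq0.trans hqc).le
  gcongr
  exact hy.2.le

theorem deltaZbar1_eq_tsum (hq0 : 0 < q) (hq1 : q < 1) (s : ℕ) :
    deltaZbar1 q s = ∑' l : ℕ, ((l : ℝ) + 1) *
      (s * zbarTerm q (s + 1) (l + 1) - (s - 1) * zbarTerm q s (l + 1)) := by
  rw [deltaZbar1, (hasDerivAt_zbar1 hq0 hq1 s).deriv, ← tsum_mul_left]
  refine tsum_congr fun l => ?_
  have hx : 1 - q ^ (l + 1) ≠ 0 := (sub_pos.2 (pow_lt_one₀ hq0.le hq1 l.succ_ne_zero)).ne'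
  simp only [Nat.cast_succ, Nat.add_sub_cancel, zbarTerm]
  rw [pow_succ (1 - q ^ (l + 1)) s]
  field_simp
  ring

theorem deltaZbar1_eq (hq0 : 0 < q) (hq1 : q < 1) (s : ℕ) :
    deltaZbar1 q s =
      s * (zbar1 q (s + 1) + zbar2 q (s + 1) 0) - (s - 1) * (zbar1 q s + zbar2 q s 0) := by
  have h := summable_succ_mul_zbarTerm hq0.le hq1
  rw [deltaZbar1_eq_tsum hq0 hq1, ← tsum_succ_mul_zbarTerm hq0.le hq1,
    ← tsum_succ_mul_zbarTerm hq0.le hq1, ← tsum_mul_left, ← tsum_mul_left,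
    ← ((h _).mul_left _).tsum_sub ((h _).mul_left _)]
  exact tsum_congr fun l => by ring

end

/-- `z̄_q(2)·z̄_q(3) = 3z̄_q(3,2) + z̄_q(2,3) + 6z̄_q(4,1) − 2z̄_q(2,2) − 7z̄_q(3,1)
  + z̄_q(2,1) − δz̄_q(3) + 3z̄_q(4) − 2z̄_q(3)`. -/
theorem zbar2_mul_zbar3 (q : ℝ) (hq0 : 0 < q) (hq1 : q < 1) :
    zbar1 q 2 * zbar1 q 3 =
      3 * zbar2 q 3 2 + zbar2 q 2 3 + 6 * zbar2 q 4 1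
        - 2 * zbar2 q 2 2 - 7 * zbar2 q 3 1 + zbar2 q 2 1
        - deltaZbar1 q 3 + 3 * zbar1 q 4 - 2 * zbar1 q 3 := by
  rw [zbar1_mul_zbar1 hq0.le hq1, deltaZbar1_eq hq0 hq1]
  simp only [zbarConv_succ_succ hq0 hq1, zbarConv_zero_left, zbarConv_zero_right]
  push_cast
  ring
end

section
/- For 0 < q < 1: −\sum_{l>0} (l−1) q^l (1 + 4q^l + q^{2l})/(1−q^l)^5 = −(3/2)δ\bar{z}_q(4) + (1/2)δ\bar{z}_q(3) + 6\bar{z}_q(5) − 6\bar{z}_q(4) + \bar{z}_q(3), where δ = q d/dq and \bar{z}_q(s) = \sum_{l>0} q^l/(1−q^l)^s. -/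
/-!
Differentiating `z̄_q(s+1)` term by term (legitimate because on `(0, b)`, `b < 1`, the derived
series is dominated by `∑ (n+1) bⁿ`) gives
`δ z̄_q(s+1) = ∑ₗ l qˡ (1 + s qˡ) / (1 - qˡ)^(s+2)`.
Substituting this for `s = 2, 3`, both sides become series over `l` whose terms agree as rational
functions of `qˡ`.
-/

open Set

theorem hasDerivAt_pow_div_one_sub_pow (m s : ℕ) {x : ℝ} (hx : x ^ m ≠ 1) :
    HasDerivAt (fun y : ℝ => y ^ m / (1 - y ^ m) ^ (s + 1))
      (m * x ^ (m - 1) * (1 + s * x ^ m) / (1 - x ^ m) ^ (s + 2)) x := by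
  have hne : 1 - x ^ m ≠ 0 := sub_ne_zero.mpr hx.symm
  have hpow := hasDerivAt_pow m x
  refine (hpow.fun_div (((hasDerivAt_const x 1).fun_sub hpow).fun_pow (s + 1))
    (pow_ne_zero _ hne)).congr_deriv ?_
  field_simp
  push_cast
  ring

theorem summable_pow_div_one_sub_pow {q : ℝ} (hq0 : 0 ≤ q) (hq1 : q < 1) (s : ℕ) :
    Summable fun n : ℕ => q ^ (n + 1) / (1 - q ^ (n + 1)) ^ s := by
  have hle (n : ℕ) : q ^ (n + 1) ≤ q := pow_le_of_le_one hq0 hq1.le n.succ_ne_zero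
  have hgeom : Summable fun n : ℕ => q ^ (n + 1) / (1 - q) ^ s :=
    ((summable_nat_add_iff 1).mpr (summable_geometric_of_lt_one hq0 hq1)).div_const _
  refine hgeom.of_nonneg_of_le (fun n => ?_) (fun n => ?_)
  · have := hle n
    exact div_nonneg (by positivity) (pow_nonneg (by linarith) s)
  · have := hle n
    gcongr

theorem summable_succ_mul_geometric {b : ℝ} (hb0 : 0 ≤ b) (hb1 : b < 1) :
    Summable fun n : ℕ => ((n : ℝ) + 1) * b ^ n := by
  have hb : ‖b‖ < 1 := by rwa [Real.norm_of_nonneg hb0]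
  simpa [add_mul] using (hasSum_coe_mul_geometric_of_norm_lt_one hb).summable.add
    (summable_geometric_of_lt_one hb0 hb1)

theorem succ_mul_pow_div_one_sub_pow_le {b y : ℝ} (hy0 : 0 ≤ y) (hyb : y ≤ b) (hb1 : b < 1)
    (s n : ℕ) :
    ((n : ℝ) + 1) * y ^ n * (1 + s * y ^ (n + 1)) / (1 - y ^ (n + 1)) ^ (s + 2) ≤
      (1 + s) / (1 - b) ^ (s + 2) * (((n : ℝ) + 1) * b ^ n) := by
  have hb0 : 0 ≤ b := hy0.trans hyb
  have hy1 : y ^ (n + 1) ≤ y := pow_le_of_le_one hy0 (by linarith) n.succ_ne_zero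
  have hs : (s : ℝ) * y ^ (n + 1) ≤ s := mul_le_of_le_one_right s.cast_nonneg (by linarith)
  rw [div_mul_eq_mul_div, mul_comm (1 + (s : ℝ))]
  gcongr _ * ?_ * (1 + ?_) / (1 - ?_) ^ _
  exacts [pow_le_pow_left₀ hy0 hyb n, hy1.trans hyb]

theorem hasSum_deltaZbar1 {q : ℝ} (hq0 : 0 < q) (hq1 : q < 1) (s : ℕ) :
    HasSum (fun n : ℕ => ((n : ℝ) + 1) * q ^ (n + 1) * (1 + s * q ^ (n + 1)) /
      (1 - q ^ (n + 1)) ^ (s + 2)) (deltaZbar1 q (s + 1)) := by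
  obtain ⟨b, hqb, hb1⟩ := exists_between hq1
  set g' : ℕ → ℝ → ℝ := fun n y =>
    ((n : ℝ) + 1) * y ^ n * (1 + s * y ^ (n + 1)) / (1 - y ^ (n + 1)) ^ (s + 2)
  have hq : q ∈ Ioo 0 b := ⟨hq0, hqb⟩
  have hderiv (n : ℕ) (y : ℝ) (hy : y ∈ Ioo 0 b) :
      HasDerivAt (fun x : ℝ => x ^ (n + 1) / (1 - x ^ (n + 1)) ^ (s + 1)) (g' n y) y := by
    have hy1 : y ^ (n + 1) < 1 := pow_lt_one₀ hy.1.le (hy.2.trans hb1) n.succ_ne_zero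
    simpa using hasDerivAt_pow_div_one_sub_pow (n + 1) s hy1.ne
  have hbound (n : ℕ) (y : ℝ) (hy : y ∈ Ioo 0 b) :
      ‖g' n y‖ ≤ (1 + s) / (1 - b) ^ (s + 2) * (((n : ℝ) + 1) * b ^ n) := by
    have hy1 : y ^ (n + 1) < 1 := pow_lt_one₀ hy.1.le (hy.2.trans hb1) n.succ_ne_zero
    have hg' : 0 ≤ g' n y :=
      div_nonneg (by have := hy.1; positivity) (pow_nonneg (by linarith) _)
    rw [Real.norm_of_nonneg hg']
    exact succ_mul_pow_div_one_sub_pow_le hy.1.le hy.2.le hb1 s n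
  have hu := (summable_succ_mul_geometric (hq0.trans hqb).le hb1).mul_left
    ((1 + s) / (1 - b) ^ (s + 2))
  have hsum : HasDerivAt (fun t => zbar1 t (s + 1)) (∑' n, g' n q) q :=
    hasDerivAt_tsum_of_isPreconnected hu isOpen_Ioo isPreconnected_Ioo hderiv hbound hq
      (summable_pow_div_one_sub_pow hq0.le hq1 (s + 1)) hq
  have hsummable : Summable fun n => g' n q := .of_norm_bounded hu fun n => hbound n q hq
  rw [deltaZbar1, hsum.deriv]
  refine (hsummable.hasSum.mul_left q).congr_fun fun n => ?_
  simp only [g']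
  ring

/-- `−∑_{l>0} (l−1) qˡ (1+4qˡ+q^{2l})/(1−qˡ)⁵
  = −(3/2)δz̄_q(4) + (1/2)δz̄_q(3) + 6z̄_q(5) − 6z̄_q(4) + z̄_q(3)`. -/
theorem z33_identity (q : ℝ) (hq0 : 0 < q) (hq1 : q < 1) :
    -(∑' l : ℕ, (l : ℝ) * q ^ (l + 1) * (1 + 4 * q ^ (l + 1) + q ^ (2 * (l + 1))) /
        (1 - q ^ (l + 1)) ^ 5) =
      -(3 / 2) * deltaZbar1 q 4 + (1 / 2) * deltaZbar1 q 3
        + 6 * zbar1 q 5 - 6 * zbar1 q 4 + zbar1 q 3 := by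
  have hzbar1 (s : ℕ) : HasSum (fun n : ℕ => q ^ (n + 1) / (1 - q ^ (n + 1)) ^ s) (zbar1 q s) :=
    (summable_pow_div_one_sub_pow hq0.le hq1 s).hasSum
  have hrhs := (((((hasSum_deltaZbar1 hq0 hq1 3).mul_left (-(3 / 2))).add
    ((hasSum_deltaZbar1 hq0 hq1 2).mul_left (1 / 2))).add ((hzbar1 5).mul_left 6)).sub
    ((hzbar1 4).mul_left 6)).add (hzbar1 3)
  refine Eq.trans ?_ hrhs.tsum_eq
  rw [← tsum_neg]
  congr 1 with l
  have hne : 1 - q ^ (l + 1) ≠ 0 :=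
    sub_ne_zero.mpr (pow_lt_one₀ hq0.le hq1 l.succ_ne_zero).ne'
  rw [mul_comm 2, pow_mul]
  field_simp
  push_cast
  ring
end
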